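/- Let (Γ_0, α_0, θ_0, λ_0) be a subskeleton of a generalized 1-skeleton (Γ, α, θ, λ) that is level and has trivial normal holonomy. Then Γ_0 admits a blow-up system: there exists a function n : N_0 → ℝ_{>0} on the normal edges of Γ_0 such that n(e')/n(θ_e(e')) = λ_e(e') for every oriented edge e of Γ_0 and every e' ∈ N_0^{i(e)}. -/

import Mathlib

open SimpleGraph

universe u u' v

variable {V : Type u}

/-- The type of connections on a graph: for each oriented edge (given by an adjacency proof),
a bijection between the neighbor set of the initial vertex and that of the terminal vertex. -/
abbrev GraphConn {V : Type u} (G : SimpleGraph V) : Type u :=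
  ∀ ⦃p q : V⦄, G.Adj p q → (↥(G.neighborSet p) ≃ ↥(G.neighborSet q))

/-- The type of compatibility systems: for each oriented edge, a real-valued function on the
oriented edges at the initial vertex. -/
abbrev CompatSys {V : Type u} (G : SimpleGraph V) : Type u :=
  ∀ ⦃p q : V⦄, G.Adj p q → (↥(G.neighborSet p) → ℝ)

/-- The type of (generalized) axial functions with values in `W`. -/
abbrev AxialFn {V : Type u} (G : SimpleGraph V) (W : Type v) : Type (max u v) :=
  ∀ ⦃p q : V⦄, G.Adj p q → W

/-- The `G`-adjacency underlying an element of a neighbor set. -/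
def nadj {G : SimpleGraph V} {p : V} (e : ↥(G.neighborSet p)) : G.Adj p ↑e := e.2

/-- `θ` is a connection: `θ_e e = ē` and `θ_{ē} = θ_e⁻¹`. -/
def IsConnection (G : SimpleGraph V) (θ : GraphConn G) : Prop :=
  (∀ ⦃p q : V⦄ (h : G.Adj p q), θ h ⟨q, h⟩ = ⟨p, h.symm⟩) ∧
  (∀ ⦃p q : V⦄ (h : G.Adj p q), θ h.symm = (θ h).symm)

/-- `lam` is a compatibility system for `(G, θ)`: positive values with
`λ_{ē}(θ_e e') = 1 / λ_e(e')`. -/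
def IsCompatSystem (G : SimpleGraph V) (θ : GraphConn G) (lam : CompatSys G) : Prop :=
  (∀ ⦃p q : V⦄ (h : G.Adj p q) (e : ↥(G.neighborSet p)), 0 < lam h e) ∧
  (∀ ⦃p q : V⦄ (h : G.Adj p q) (e : ↥(G.neighborSet p)),
      lam h.symm (θ h e) = (lam h e)⁻¹)

section Axial

variable {W : Type v} [AddCommGroup W] [Module ℝ W]

/-- `α` is a generalized axial function for `(G, θ, λ)`: (gA1) `α(e) = -m_e • α(ē)` for some
`m_e > 0`, and (gA2) `α(e') - λ_e(e') • α(θ_e(e'))` is a scalar multiple of `α(e)` for `e' ≠ e`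
at the initial vertex of `e`. -/
def IsGenAxial (G : SimpleGraph V) (θ : GraphConn G) (lam : CompatSys G)
    (α : AxialFn G W) : Prop :=
  (∀ ⦃p q : V⦄ (h : G.Adj p q), ∃ m : ℝ, 0 < m ∧ α h = -(m • α h.symm)) ∧
  (∀ ⦃p q : V⦄ (h : G.Adj p q) (e : ↥(G.neighborSet p)), (↑e : V) ≠ q →
      ∃ c : ℝ, α (nadj e) - lam h e • α (nadj (θ h e)) = c • α h)

/-- The quadruple `(G, θ, λ, α)` is a generalized 1-skeleton (on a connected graph). -/
structure IsGenSkeleton (G : SimpleGraph V) (θ : GraphConn G) (lam : CompatSys G)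
    (α : AxialFn G W) : Prop where
  connected : G.Connected
  conn : IsConnection G θ
  compat : IsCompatSystem G θ lam
  axial : IsGenAxial G θ lam α

/-- The extra axioms making a generalized 1-skeleton an honest 1-skeleton:
`α(ē) = -α(e)` and pairwise linear independence at each vertex. -/
def IsSkeletal (G : SimpleGraph V) (α : AxialFn G W) : Prop :=
  (∀ ⦃p q : V⦄ (h : G.Adj p q), α h.symm = -α h) ∧
  (∀ (p : V) (e e' : ↥(G.neighborSet p)), e ≠ e' →
      LinearIndependent ℝ ![α (nadj e), α (nadj e')])

/-- `(G, θ, λ, α)` is a 1-skeleton. -/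
def IsOneSkeleton (G : SimpleGraph V) (θ : GraphConn G) (lam : CompatSys G)
    (α : AxialFn G W) : Prop :=
  IsGenSkeleton G θ lam α ∧ IsSkeletal G α

/-- `G` is `d`-valent. -/
def Valency (G : SimpleGraph V) (d : ℕ) : Prop :=
  ∀ p : V, (G.neighborSet p).ncard = d

/-- `α` is `k`-independent. -/
def kIndep (G : SimpleGraph V) (α : AxialFn G W) (k : ℕ) : Prop :=
  ∀ (p : V) (s : Finset ↥(G.neighborSet p)), s.card = k →
    LinearIndependent ℝ (fun e : ↥(↑s : Set ↥(G.neighborSet p)) => α (nadj (e : ↥(G.neighborSet p))))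

/-- `α` is effective: the axial vectors at each vertex span the target space. -/
def EffectiveAxial (G : SimpleGraph V) (α : AxialFn G W) : Prop :=
  ∀ p : V, Submodule.span ℝ (Set.range fun e : ↥(G.neighborSet p) => α (nadj e)) = ⊤

/-- A covector is generic if it pairs nonzero with each axial vector. -/
def GenericCovec (G : SimpleGraph V) (α : AxialFn G W) (ξ : W →ₗ[ℝ] ℝ) : Prop :=
  ∀ ⦃p q : V⦄ (h : G.Adj p q), ξ (α h) ≠ 0

/-- The directed-edge relation induced by a covector. -/
def dirRel (G : SimpleGraph V) (α : AxialFn G W) (ξ : W →ₗ[ℝ] ℝ) : V → V → Prop :=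
  fun p q => ∃ h : G.Adj p q, 0 < ξ (α h)

/-- A generic covector is polarizing if the induced orientation has no directed cycles. -/
def PolarizingCovec (G : SimpleGraph V) (α : AxialFn G W) (ξ : W →ₗ[ℝ] ℝ) : Prop :=
  GenericCovec G α ξ ∧ ∀ p : V, ¬ Relation.TransGen (dirRel G α ξ) p p

/-- A Morse function compatible with a (polarizing) covector. -/
def MorseCompat (G : SimpleGraph V) (α : AxialFn G W) (ξ : W →ₗ[ℝ] ℝ) (φ : V → ℝ) : Prop :=
  Function.Injective φ ∧ ∀ ⦃p q : V⦄ (h : G.Adj p q), 0 < ξ (α h) → φ p < φ q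

/-- An embedding of a 1-skeleton. -/
def IsSkelEmbedding (G : SimpleGraph V) (α : AxialFn G W) (f : V → W) : Prop :=
  ∀ ⦃p q : V⦄ (h : G.Adj p q), ∃ c : ℝ, 0 < c ∧ f q - f p = c • α h

end Axial
section Sub

variable {W : Type v} [AddCommGroup W] [Module ℝ W]

/-- Transport of oriented edges along a walk, via the connection. -/
def transport {G : SimpleGraph V} (θ : GraphConn G) :
    ∀ {p q : V}, G.Walk p q → ↥(G.neighborSet p) → ↥(G.neighborSet q)
  | _, _, SimpleGraph.Walk.nil, e => e
  | _, _, SimpleGraph.Walk.cons h w, e => transport θ w (θ h e)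

/-- The local path-connection number of an oriented edge along a walk. -/
def transNum {G : SimpleGraph V} (θ : GraphConn G) (lam : CompatSys G) :
    ∀ {p q : V}, G.Walk p q → ↥(G.neighborSet p) → ℝ
  | _, _, SimpleGraph.Walk.nil, _ => 1
  | _, _, SimpleGraph.Walk.cons h w, e => lam h e * transNum θ lam w (θ h e)

/-- A walk of `G` lies in the subgraph `H` if all its darts are edges of `H`. -/
def WalkIn {G : SimpleGraph V} (H : G.Subgraph) {p q : V} (w : G.Walk p q) : Prop :=
  ∀ d ∈ w.darts, H.Adj d.toProd.1 d.toProd.2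

/-- A subskeleton: a connected regular totally geodesic subgraph. -/
structure IsSubskeleton {G : SimpleGraph V} (θ : GraphConn G) (H : G.Subgraph) : Prop where
  connected : H.Connected
  regular : ∃ k : ℕ, ∀ p ∈ H.verts, (H.neighborSet p).ncard = k
  geodesic : ∀ ⦃p q : V⦄ (h : H.Adj p q) (e : ↥(G.neighborSet p)),
      H.Adj p ↑e → H.Adj q ↑(θ (H.adj_sub h) e)

/-- The subskeleton `H` has trivial normal holonomy. -/
def TrivialNormalHolonomy {G : SimpleGraph V} (θ : GraphConn G) (H : G.Subgraph) : Prop :=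
  ∀ (p : V) (w : G.Walk p p), WalkIn H w →
    ∀ e : ↥(G.neighborSet p), ¬ H.Adj p ↑e → transport θ w e = e

/-- The subskeleton `H` is level. -/
def LevelSub {G : SimpleGraph V} (θ : GraphConn G) (lam : CompatSys G)
    (H : G.Subgraph) : Prop :=
  ∀ (p : V) (w : G.Walk p p), WalkIn H w →
    ∀ e : ↥(G.neighborSet p), ¬ H.Adj p ↑e → transport θ w e = e →
      transNum θ lam w e = 1

/-- The index of a vertex of a subgraph with respect to a covector. -/
noncomputable def subIndex {G : SimpleGraph V} (α : AxialFn G W) (ξ : W →ₗ[ℝ] ℝ)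
    (H : G.Subgraph) (p : V) : ℕ :=
  {q : V | ∃ h : H.Adj p q, ξ (α (H.adj_sub h)) < 0}.ncard

/-- `b₀` of a subgraph with respect to a covector: the number of index-zero vertices. -/
noncomputable def subB0 {G : SimpleGraph V} (α : AxialFn G W) (ξ : W →ₗ[ℝ] ℝ)
    (H : G.Subgraph) : ℕ :=
  {p : V | p ∈ H.verts ∧ subIndex α ξ H p = 0}.ncard

/-- A 2-face: a 2-valent subskeleton with `b₀ = 1` (computed with the covector `ξ`). -/
def IsTwoFace {G : SimpleGraph V} (θ : GraphConn G) (α : AxialFn G W) (ξ : W →ₗ[ℝ] ℝ)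
    (H : G.Subgraph) : Prop :=
  IsSubskeleton θ H ∧ (∀ p ∈ H.verts, (H.neighborSet p).ncard = 2) ∧ subB0 α ξ H = 1

/-- Enough 2-faces: any two distinct oriented edges at a vertex lie on a unique 2-face. -/
def EnoughTwoFaces (G : SimpleGraph V) (θ : GraphConn G) (α : AxialFn G W)
    (ξ : W →ₗ[ℝ] ℝ) : Prop :=
  ∀ (p : V) (e e' : ↥(G.neighborSet p)), e ≠ e' →
    ∃! H : G.Subgraph, IsTwoFace θ α ξ H ∧ H.Adj p ↑e ∧ H.Adj p ↑e'

/-- A 1-skeleton is reducible if it admits a polarizing covector and has enough 2-faces. -/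
def ReducibleSkel (G : SimpleGraph V) (θ : GraphConn G) (α : AxialFn G W) : Prop :=
  ∃ ξ : W →ₗ[ℝ] ℝ, PolarizingCovec G α ξ ∧ EnoughTwoFaces G θ α ξ

/-- A total lift: an effective generalized axial function `A` for the same `(G, θ, λ)` with
values in `ℝ^d` (`d` the valency), together with a surjective linear map `L` with `α = L ∘ A`. -/
def HasTotalLift (G : SimpleGraph V) (θ : GraphConn G) (lam : CompatSys G)
    (α : AxialFn G W) (d : ℕ) : Prop :=
  ∃ A : AxialFn G (Fin d → ℝ),
    IsGenAxial G θ lam A ∧ EffectiveAxial G A ∧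
    ∃ L : (Fin d → ℝ) →ₗ[ℝ] W, Function.Surjective L ∧
      ∀ ⦃p q : V⦄ (h : G.Adj p q), α h = L (A h)

/-- Equivalence of generalized 1-skeleta on the same graph-connection pair. -/
def EquivGenSkel (G : SimpleGraph V) (θ : GraphConn G) (lam lam' : CompatSys G)
    (α α' : AxialFn G W) : Prop :=
  ∃ κ : ∀ ⦃p q : V⦄, G.Adj p q → ℝ,
    (∀ ⦃p q : V⦄ (h : G.Adj p q), 0 < κ h) ∧
    (∀ ⦃p q : V⦄ (h : G.Adj p q), α h = κ h • α' h) ∧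
    (∀ ⦃p q : V⦄ (h : G.Adj p q) (e : ↥(G.neighborSet p)),
        lam h e = (κ (nadj e) / κ (nadj (θ h e))) * lam' h e)

/-- The graph whose edges are the edges of `G` with axial vector in the subspace `Hs`. -/
def sliceGraph (G : SimpleGraph V) (α : AxialFn G W) (Hs : Submodule ℝ W) :
    SimpleGraph V where
  Adj p q := ∃ h : G.Adj p q, α h ∈ Hs ∧ α h.symm ∈ Hs
  symm := by
    refine ⟨?_⟩
    intro p q ⟨h, h1, h2⟩
    exact ⟨h.symm, h2, h1⟩
  loopless := by
    refine ⟨?_⟩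
    intro p ⟨h, _⟩
    exact G.loopless.irrefl p h

/-- The connected component of `v` in the slice graph, as a subgraph of `G`. -/
def sliceComponent (G : SimpleGraph V) (α : AxialFn G W) (Hs : Submodule ℝ W) (v : V) :
    G.Subgraph where
  verts := {w : V | (sliceGraph G α Hs).Reachable v w}
  Adj p q := (sliceGraph G α Hs).Adj p q ∧ (sliceGraph G α Hs).Reachable v p ∧
    (sliceGraph G α Hs).Reachable v q
  adj_sub := fun h => h.1.1
  edge_vert := fun h => h.2.1
  symm := ⟨fun p q h => ⟨h.1.symm, h.2.2, h.2.1⟩⟩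

/-- Pointedness of a subgraph (e.g. a slice): for every covector nonvanishing on its edges
there is a unique source vertex. -/
def SubPointed {G : SimpleGraph V} (α : AxialFn G W) (H : G.Subgraph) : Prop :=
  ∀ ξ : W →ₗ[ℝ] ℝ, (∀ ⦃p q : V⦄ (h : H.Adj p q), ξ (α (H.adj_sub h)) ≠ 0) →
    ∃! p : V, p ∈ H.verts ∧ ∀ ⦃q : V⦄ (h : H.Adj p q), 0 < ξ (α (H.adj_sub h))

/-- Pointedness of the whole skeleton: for every generic covector there is a unique source. -/
def PointedSkel (G : SimpleGraph V) (α : AxialFn G W) : Prop :=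
  ∀ ξ : W →ₗ[ℝ] ℝ, GenericCovec G α ξ →
    ∃! p : V, ∀ ⦃q : V⦄ (h : G.Adj p q), 0 < ξ (α h)

/-- A 3-independent 1-skeleton is noncyclic if it admits a polarizing covector and every
2-slice is pointed. -/
def Noncyclic (G : SimpleGraph V) (α : AxialFn G W) : Prop :=
  kIndep G α 3 ∧ (∃ ξ : W →ₗ[ℝ] ℝ, PolarizingCovec G α ξ) ∧
  ∀ (Hs : Submodule ℝ W), Module.finrank ℝ ↥Hs = 2 → ∀ v : V,
    SubPointed α (sliceComponent G α Hs v)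

/-- A `d`-valent `d`-independent 1-skeleton is toral if every slice is pointed. -/
def Toral (G : SimpleGraph V) (α : AxialFn G W) : Prop :=
  ∀ (Hs : Submodule ℝ W) (v : V), SubPointed α (sliceComponent G α Hs v)

end Sub
section CrossSection

variable {Vc : Type u'} {W : Type v} [AddCommGroup W] [Module ℝ W]

/-- Specification of the *down* `c`-cross-section of a reducible 1-skeleton `(G, θ, λ, α)`
with polarizing covector `ξ`, compatible Morse function `φ`, and regular value `c`.
`νm` identifies the vertices of the cross-section graph `Gc` with the oriented edges of `G`
at `c`-level; `face` assigns to each oriented edge of `Gc` the corresponding 2-face of `G`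
at `c`-level; `θc`, `λc`, `αc` are the down connection, down compatibility system and down
axial function, characterized by normal transport along lower paths. -/
structure IsDownCrossSection (G : SimpleGraph V) (θ : GraphConn G) (lam : CompatSys G)
    (α : AxialFn G W) (ξ : W →ₗ[ℝ] ℝ) (φ : V → ℝ) (c : ℝ)
    (Gc : SimpleGraph Vc) (νm : Vc → V × V) (θc : GraphConn Gc) (lamc : CompatSys Gc)
    (αc : AxialFn Gc ↥(LinearMap.ker ξ))
    (face : ∀ ⦃x y : Vc⦄, Gc.Adj x y → G.Subgraph) : Prop where
  nu_inj : Function.Injective νm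
  nu_level : ∀ x : Vc, ∃ _ : G.Adj (νm x).1 (νm x).2, φ (νm x).1 < c ∧ c < φ (νm x).2
  nu_surj : ∀ ⦃p q : V⦄, G.Adj p q → φ p < c → c < φ q → ∃ x : Vc, νm x = (p, q)
  conn_c : IsConnection Gc θc
  compat_c : IsCompatSystem Gc θc lamc
  face_two : ∀ ⦃x y : Vc⦄ (h : Gc.Adj x y), IsTwoFace θ α ξ (face h)
  face_symm : ∀ ⦃x y : Vc⦄ (h : Gc.Adj x y), face h.symm = face h
  face_init : ∀ ⦃x y : Vc⦄ (h : Gc.Adj x y), (face h).Adj (νm x).1 (νm x).2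
  face_inj : ∀ ⦃x y y' : Vc⦄ (h : Gc.Adj x y) (h' : Gc.Adj x y'), face h = face h' → y = y'
  face_surj : ∀ Q : G.Subgraph, IsTwoFace θ α ξ Q →
      ∀ ⦃p q : V⦄, Q.Adj p q → φ p < c → c < φ q →
        ∃ (x y : Vc) (h : Gc.Adj x y), νm x = (p, q) ∧ face h = Q
  conn_spec : ∀ ⦃x y : Vc⦄ (h : Gc.Adj x y) (x' : ↥(Gc.neighborSet x)), (↑x' : Vc) ≠ y →
      ∀ e : ↥(G.neighborSet (νm x).1),
        (face (nadj x')).Adj (νm x).1 ↑e → (↑e : V) ≠ (νm x).2 →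
      ∀ e' : ↥(G.neighborSet (νm y).1),
        (face (nadj (θc h x'))).Adj (νm y).1 ↑e' → (↑e' : V) ≠ (νm y).2 →
      ∀ (wlk : G.Walk (νm x).1 (νm y).1), WalkIn (face h) wlk →
        (∀ z ∈ wlk.support, φ z < c) →
        transport θ wlk e = e'
  lam_spec : ∀ ⦃x y : Vc⦄ (h : Gc.Adj x y) (x' : ↥(Gc.neighborSet x)), (↑x' : Vc) ≠ y →
      ∀ e : ↥(G.neighborSet (νm x).1),
        (face (nadj x')).Adj (νm x).1 ↑e → (↑e : V) ≠ (νm x).2 →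
      ∀ (wlk : G.Walk (νm x).1 (νm y).1), WalkIn (face h) wlk →
        (∀ z ∈ wlk.support, φ z < c) →
        transNum θ lam wlk e = lamc h x'
  alpha_spec : ∀ ⦃x y : Vc⦄ (h : Gc.Adj x y) (hpq : G.Adj (νm x).1 (νm x).2)
      (e : ↥(G.neighborSet (νm x).1)),
      (face h).Adj (νm x).1 ↑e → (↑e : V) ≠ (νm x).2 →
      (↑(αc h) : W) = α (nadj e) - (ξ (α (nadj e)) / ξ (α hpq)) • α hpq

/-- Specification of the *up* `c`-cross-section; as `IsDownCrossSection`, but using normal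
transport along upper paths and the up axial function. -/
structure IsUpCrossSection (G : SimpleGraph V) (θ : GraphConn G) (lam : CompatSys G)
    (α : AxialFn G W) (ξ : W →ₗ[ℝ] ℝ) (φ : V → ℝ) (c : ℝ)
    (Gc : SimpleGraph Vc) (νm : Vc → V × V) (θc : GraphConn Gc) (lamc : CompatSys Gc)
    (αc : AxialFn Gc ↥(LinearMap.ker ξ))
    (face : ∀ ⦃x y : Vc⦄, Gc.Adj x y → G.Subgraph) : Prop where
  nu_inj : Function.Injective νm
  nu_level : ∀ x : Vc, ∃ _ : G.Adj (νm x).1 (νm x).2, φ (νm x).1 < c ∧ c < φ (νm x).2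
  nu_surj : ∀ ⦃p q : V⦄, G.Adj p q → φ p < c → c < φ q → ∃ x : Vc, νm x = (p, q)
  conn_c : IsConnection Gc θc
  compat_c : IsCompatSystem Gc θc lamc
  face_two : ∀ ⦃x y : Vc⦄ (h : Gc.Adj x y), IsTwoFace θ α ξ (face h)
  face_symm : ∀ ⦃x y : Vc⦄ (h : Gc.Adj x y), face h.symm = face h
  face_init : ∀ ⦃x y : Vc⦄ (h : Gc.Adj x y), (face h).Adj (νm x).1 (νm x).2
  face_inj : ∀ ⦃x y y' : Vc⦄ (h : Gc.Adj x y) (h' : Gc.Adj x y'), face h = face h' → y = y'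
  face_surj : ∀ Q : G.Subgraph, IsTwoFace θ α ξ Q →
      ∀ ⦃p q : V⦄, Q.Adj p q → φ p < c → c < φ q →
        ∃ (x y : Vc) (h : Gc.Adj x y), νm x = (p, q) ∧ face h = Q
  conn_spec : ∀ ⦃x y : Vc⦄ (h : Gc.Adj x y) (x' : ↥(Gc.neighborSet x)), (↑x' : Vc) ≠ y →
      ∀ e : ↥(G.neighborSet (νm x).2),
        (face (nadj x')).Adj (νm x).2 ↑e → (↑e : V) ≠ (νm x).1 →
      ∀ e' : ↥(G.neighborSet (νm y).2),
        (face (nadj (θc h x'))).Adj (νm y).2 ↑e' → (↑e' : V) ≠ (νm y).1 →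
      ∀ (wlk : G.Walk (νm x).2 (νm y).2), WalkIn (face h) wlk →
        (∀ z ∈ wlk.support, c < φ z) →
        transport θ wlk e = e'
  lam_spec : ∀ ⦃x y : Vc⦄ (h : Gc.Adj x y) (x' : ↥(Gc.neighborSet x)), (↑x' : Vc) ≠ y →
      ∀ e : ↥(G.neighborSet (νm x).2),
        (face (nadj x')).Adj (νm x).2 ↑e → (↑e : V) ≠ (νm x).1 →
      ∀ (wlk : G.Walk (νm x).2 (νm y).2), WalkIn (face h) wlk →
        (∀ z ∈ wlk.support, c < φ z) →
        transNum θ lam wlk e = lamc h x'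
  alpha_spec : ∀ ⦃x y : Vc⦄ (h : Gc.Adj x y) (hpq : G.Adj (νm x).1 (νm x).2)
      (e : ↥(G.neighborSet (νm x).2)),
      (face h).Adj (νm x).2 ↑e → (↑e : V) ≠ (νm x).1 →
      (↑(αc h) : W) = α (nadj e) - (ξ (α (nadj e)) / ξ (α hpq.symm)) • α hpq.symm

end CrossSection
section BlowUp

variable {V' : Type u'} {W : Type v} [AddCommGroup W] [Module ℝ W]

/-- A blow-up system for the subskeleton `H`: positive scalars on the normal edges with
`n(e') = λ_e(e') · n(θ_e(e'))` along edges of `H`. -/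
def IsBlowUpSystem {G : SimpleGraph V} (θ : GraphConn G) (lam : CompatSys G)
    (H : G.Subgraph) (n : ∀ p : V, ↥(G.neighborSet p) → ℝ) : Prop :=
  (∀ p ∈ H.verts, ∀ e : ↥(G.neighborSet p), ¬ H.Adj p ↑e → 0 < n p e) ∧
  (∀ ⦃p q : V⦄ (h : H.Adj p q) (e : ↥(G.neighborSet p)), ¬ H.Adj p ↑e →
      n p e = lam (H.adj_sub h) e * n q (θ (H.adj_sub h) e))

/-- No normal edge of `H` has its terminal vertex in `H`. -/
def NoChord {G : SimpleGraph V} (H : G.Subgraph) : Prop :=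
  ∀ p ∈ H.verts, ∀ e : ↥(G.neighborSet p), ¬ H.Adj p ↑e → (↑e : V) ∉ H.verts

/-- Specification of the blow-up `(G', θ', λ', α')` of the generalized 1-skeleton
`(G, θ, λ, α)` along the subskeleton `H`, with respect to the blow-up system `n`.
`β` is the blow-down map on vertices and `z p e` is the singular-locus vertex `z^p_e`
(for `p ∈ H.verts` and `e` normal to `H` at `p`). -/
structure IsBlowUp (G : SimpleGraph V) (θ : GraphConn G) (lam : CompatSys G)
    (α : AxialFn G W) (H : G.Subgraph) (n : ∀ p : V, ↥(G.neighborSet p) → ℝ)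
    (G' : SimpleGraph V') (θ' : GraphConn G') (lam' : CompatSys G') (α' : AxialFn G' W)
    (β : V' → V) (z : ∀ p : V, ↥(G.neighborSet p) → V') : Prop where
  conn' : IsConnection G' θ'
  compat' : IsCompatSystem G' θ' lam'
  beta_z : ∀ p ∈ H.verts, ∀ e : ↥(G.neighborSet p), ¬ H.Adj p ↑e → β (z p e) = p
  z_inj : ∀ ⦃p p' : V⦄, p ∈ H.verts → p' ∈ H.verts →
      ∀ ⦃e : ↥(G.neighborSet p)⦄ ⦃e' : ↥(G.neighborSet p')⦄,
        ¬ H.Adj p ↑e → ¬ H.Adj p' ↑e' → z p e = z p' e' → p = p' ∧ (↑e : V) = ↑e'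
  sing_surj : ∀ x' : V', β x' ∈ H.verts →
      ∃ (p : V) (_ : p ∈ H.verts) (e : ↥(G.neighborSet p)), ¬ H.Adj p ↑e ∧ x' = z p e
  beta_inj : ∀ ⦃x' y' : V'⦄, β x' = β y' → β x' ∉ H.verts → x' = y'
  beta_surj : ∀ x : V, x ∉ H.verts → ∃ x' : V', β x' = x
  adj_iff : ∀ x' y' : V', G'.Adj x' y' ↔
      ((β x' ∉ H.verts ∧ β y' ∉ H.verts ∧ G.Adj (β x') (β y')) ∨
       (∃ (p : V) (_ : p ∈ H.verts) (e : ↥(G.neighborSet p)) (_ : ¬ H.Adj p ↑e),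
          (x' = z p e ∧ β y' = ↑e ∧ β y' ∉ H.verts) ∨
          (y' = z p e ∧ β x' = ↑e ∧ β x' ∉ H.verts)) ∨
       (∃ (p : V) (_ : p ∈ H.verts) (e e' : ↥(G.neighborSet p))
          (_ : ¬ H.Adj p ↑e) (_ : ¬ H.Adj p ↑e'),
          (↑e : V) ≠ ↑e' ∧ x' = z p e ∧ y' = z p e') ∨
       (∃ (p q : V) (hpq : H.Adj p q) (e : ↥(G.neighborSet p)) (_ : ¬ H.Adj p ↑e),
          x' = z p e ∧ y' = z q (θ (H.adj_sub hpq) e)))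
  proj_adj : ∀ ⦃x' w' : V'⦄, G'.Adj x' w' → β x' ∉ H.verts → G.Adj (β x') (β w')
  -- axial function
  alpha_ns : ∀ ⦃x' y' : V'⦄ (h' : G'.Adj x' y'), β x' ∉ H.verts →
      ∀ (h : G.Adj (β x') (β y')), α' h' = α h
  alpha_t : ∀ ⦃p : V⦄, p ∈ H.verts → ∀ (e : ↥(G.neighborSet p)), ¬ H.Adj p ↑e →
      ∀ ⦃y' : V'⦄ (h' : G'.Adj (z p e) y'), β y' = ↑e →
        α' h' = (n p e)⁻¹ • α (nadj e)
  alpha_h : ∀ ⦃p q : V⦄ (hpq : H.Adj p q) (e : ↥(G.neighborSet p)), ¬ H.Adj p ↑e →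
      ∀ (h' : G'.Adj (z p e) (z q (θ (H.adj_sub hpq) e))), α' h' = α (H.adj_sub hpq)
  alpha_v : ∀ ⦃p : V⦄, p ∈ H.verts →
      ∀ (e e' : ↥(G.neighborSet p)), ¬ H.Adj p ↑e → ¬ H.Adj p ↑e' → (↑e : V) ≠ ↑e' →
      ∀ (h' : G'.Adj (z p e) (z p e')),
        α' h' = α (nadj e') - (n p e' / n p e) • α (nadj e)
  -- connection, on edges not issuing from the singular locus
  conn_ns : ∀ ⦃x' y' : V'⦄ (h' : G'.Adj x' y'), β x' ∉ H.verts → β y' ∉ H.verts →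
      ∀ (h : G.Adj (β x') (β y')) (w' : ↥(G'.neighborSet x')) (w : ↥(G.neighborSet (β x'))),
        (↑w : V) = β ↑w' → β ↑(θ' h' w') = ↑(θ h w)
  -- connection along `z^p_e → t(e)`
  conn_t_v : ∀ ⦃p : V⦄, p ∈ H.verts → ∀ (e : ↥(G.neighborSet p)), ¬ H.Adj p ↑e →
      ∀ ⦃y' : V'⦄ (h' : G'.Adj (z p e) y'), β y' = ↑e →
      ∀ (e'' : ↥(G.neighborSet p)), ¬ H.Adj p ↑e'' → (↑e'' : V) ≠ ↑e →
      ∀ (w' : ↥(G'.neighborSet (z p e))), (↑w' : V') = z p e'' →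
        β ↑(θ' h' w') = ↑(θ (nadj e) e'')
  conn_t_h : ∀ ⦃p : V⦄, p ∈ H.verts → ∀ (e : ↥(G.neighborSet p)), ¬ H.Adj p ↑e →
      ∀ ⦃y' : V'⦄ (h' : G'.Adj (z p e) y'), β y' = ↑e →
      ∀ ⦃r : V⦄ (hpr : H.Adj p r)
        (w' : ↥(G'.neighborSet (z p e))), (↑w' : V') = z r (θ (H.adj_sub hpr) e) →
      ∀ (rr : ↥(G.neighborSet p)), (↑rr : V) = r →
        β ↑(θ' h' w') = ↑(θ (nadj e) rr)
  -- connection along a horizontal edge `z^p_e → z^q_f`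
  conn_h_t : ∀ ⦃p q : V⦄ (hpq : H.Adj p q) (e : ↥(G.neighborSet p)), ¬ H.Adj p ↑e →
      ∀ (h' : G'.Adj (z p e) (z q (θ (H.adj_sub hpq) e)))
        (w' : ↥(G'.neighborSet (z p e))), β ↑w' = ↑e →
        β ↑(θ' h' w') = ↑(θ (H.adj_sub hpq) e)
  conn_h_v : ∀ ⦃p q : V⦄ (hpq : H.Adj p q) (e : ↥(G.neighborSet p)), ¬ H.Adj p ↑e →
      ∀ (h' : G'.Adj (z p e) (z q (θ (H.adj_sub hpq) e)))
        (e'' : ↥(G.neighborSet p)), ¬ H.Adj p ↑e'' → (↑e'' : V) ≠ ↑e →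
      ∀ (w' : ↥(G'.neighborSet (z p e))), (↑w' : V') = z p e'' →
        (↑(θ' h' w') : V') = z q (θ (H.adj_sub hpq) e'')
  conn_h_h : ∀ ⦃p q : V⦄ (hpq : H.Adj p q) (e : ↥(G.neighborSet p)), ¬ H.Adj p ↑e →
      ∀ (h' : G'.Adj (z p e) (z q (θ (H.adj_sub hpq) e)))
        ⦃r : V⦄ (hpr : H.Adj p r)
        (w' : ↥(G'.neighborSet (z p e))), (↑w' : V') = z r (θ (H.adj_sub hpr) e) →
      ∀ (rr : ↥(G.neighborSet p)), (↑rr : V) = r →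
      ∀ (s : V), s = ↑(θ (H.adj_sub hpq) rr) →
      ∀ (hqs : H.Adj q s),
        (↑(θ' h' w') : V') = z s (θ (H.adj_sub hqs) (θ (H.adj_sub hpq) e))
  -- connection along a vertical edge `z^p_e → z^p_{e'}`
  conn_v_t : ∀ ⦃p : V⦄, p ∈ H.verts →
      ∀ (e e' : ↥(G.neighborSet p)), ¬ H.Adj p ↑e → ¬ H.Adj p ↑e' → (↑e : V) ≠ ↑e' →
      ∀ (h' : G'.Adj (z p e) (z p e')) (w' : ↥(G'.neighborSet (z p e))), β ↑w' = ↑e →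
        β ↑(θ' h' w') = ↑e'
  conn_v_h : ∀ ⦃p : V⦄, p ∈ H.verts →
      ∀ (e e' : ↥(G.neighborSet p)), ¬ H.Adj p ↑e → ¬ H.Adj p ↑e' → (↑e : V) ≠ ↑e' →
      ∀ (h' : G'.Adj (z p e) (z p e')) ⦃r : V⦄ (hpr : H.Adj p r)
        (w' : ↥(G'.neighborSet (z p e))), (↑w' : V') = z r (θ (H.adj_sub hpr) e) →
        (↑(θ' h' w') : V') = z r (θ (H.adj_sub hpr) e')
  conn_v_v : ∀ ⦃p : V⦄, p ∈ H.verts →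
      ∀ (e e' e'' : ↥(G.neighborSet p)), ¬ H.Adj p ↑e → ¬ H.Adj p ↑e' → ¬ H.Adj p ↑e'' →
        (↑e : V) ≠ ↑e' → (↑e'' : V) ≠ ↑e → (↑e'' : V) ≠ ↑e' →
      ∀ (h' : G'.Adj (z p e) (z p e')) (w' : ↥(G'.neighborSet (z p e))),
        (↑w' : V') = z p e'' → (↑(θ' h' w') : V') = z p e''
  -- compatibility system
  lam_ns : ∀ ⦃x' y' : V'⦄ (h' : G'.Adj x' y'), β x' ∉ H.verts →
      ∀ (h : G.Adj (β x') (β y')) (w' : ↥(G'.neighborSet x')) (w : ↥(G.neighborSet (β x'))),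
        (↑w : V) = β ↑w' → lam' h' w' = lam h w
  lam_t_v : ∀ ⦃p : V⦄, p ∈ H.verts → ∀ (e : ↥(G.neighborSet p)), ¬ H.Adj p ↑e →
      ∀ ⦃y' : V'⦄ (h' : G'.Adj (z p e) y'), β y' = ↑e →
      ∀ (e'' : ↥(G.neighborSet p)), ¬ H.Adj p ↑e'' → (↑e'' : V) ≠ ↑e →
      ∀ (w' : ↥(G'.neighborSet (z p e))), (↑w' : V') = z p e'' →
        lam' h' w' = lam (nadj e) e''
  lam_t_h : ∀ ⦃p : V⦄, p ∈ H.verts → ∀ (e : ↥(G.neighborSet p)), ¬ H.Adj p ↑e →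
      ∀ ⦃y' : V'⦄ (h' : G'.Adj (z p e) y'), β y' = ↑e →
      ∀ ⦃r : V⦄ (hpr : H.Adj p r)
        (w' : ↥(G'.neighborSet (z p e))), (↑w' : V') = z r (θ (H.adj_sub hpr) e) →
      ∀ (rr : ↥(G.neighborSet p)), (↑rr : V) = r →
        lam' h' w' = lam (nadj e) rr
  lam_h_t : ∀ ⦃p q : V⦄ (hpq : H.Adj p q) (e : ↥(G.neighborSet p)), ¬ H.Adj p ↑e →
      ∀ (h' : G'.Adj (z p e) (z q (θ (H.adj_sub hpq) e)))
        (w' : ↥(G'.neighborSet (z p e))), β ↑w' = ↑e → lam' h' w' = 1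
  lam_h_v : ∀ ⦃p q : V⦄ (hpq : H.Adj p q) (e : ↥(G.neighborSet p)), ¬ H.Adj p ↑e →
      ∀ (h' : G'.Adj (z p e) (z q (θ (H.adj_sub hpq) e)))
        (e'' : ↥(G.neighborSet p)), ¬ H.Adj p ↑e'' → (↑e'' : V) ≠ ↑e →
      ∀ (w' : ↥(G'.neighborSet (z p e))), (↑w' : V') = z p e'' →
        lam' h' w' = lam (H.adj_sub hpq) e''
  lam_h_h : ∀ ⦃p q : V⦄ (hpq : H.Adj p q) (e : ↥(G.neighborSet p)), ¬ H.Adj p ↑e →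
      ∀ (h' : G'.Adj (z p e) (z q (θ (H.adj_sub hpq) e)))
        ⦃r : V⦄ (hpr : H.Adj p r)
        (w' : ↥(G'.neighborSet (z p e))), (↑w' : V') = z r (θ (H.adj_sub hpr) e) →
      ∀ (rr : ↥(G.neighborSet p)), (↑rr : V) = r →
        lam' h' w' = lam (H.adj_sub hpq) rr
  lam_v : ∀ ⦃p : V⦄, p ∈ H.verts →
      ∀ (e e' : ↥(G.neighborSet p)), ¬ H.Adj p ↑e → ¬ H.Adj p ↑e' → (↑e : V) ≠ ↑e' →
      ∀ (h' : G'.Adj (z p e) (z p e')) (w' : ↥(G'.neighborSet (z p e))),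
        lam' h' w' = 1

end BlowUp
section Misc

variable {W : Type v} [AddCommGroup W] [Module ℝ W]

/-- The induced subgraph of `G` on a set of vertices. -/
def inducedSub (G : SimpleGraph V) (s : Set V) : G.Subgraph where
  verts := s
  Adj p q := G.Adj p q ∧ p ∈ s ∧ q ∈ s
  adj_sub := fun h => h.1
  edge_vert := fun h => h.2.1
  symm := ⟨fun _ _ h => ⟨h.1.symm, h.2.2, h.2.1⟩⟩

/-- The graph of the direct product of a graph with the interval. -/
def prodIntervalGraph (G : SimpleGraph V) : SimpleGraph (V × Bool) where
  Adj x y := (x.2 = y.2 ∧ G.Adj x.1 y.1) ∨ (x.1 = y.1 ∧ x.2 ≠ y.2)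
  symm := by
    refine ⟨?_⟩
    rintro x y (⟨h1, h2⟩ | ⟨h1, h2⟩)
    · exact Or.inl ⟨h1.symm, h2.symm⟩
    · exact Or.inr ⟨h1.symm, Ne.symm h2⟩
  loopless := by
    refine ⟨?_⟩
    rintro x (⟨_, h⟩ | ⟨_, h⟩)
    · exact G.loopless.irrefl _ h
    · exact h rfl

/-- Specification of the direct product of the generalized 1-skeleton `(G, θ, λ, α)` in `W`
with the interval 1-skeleton `(I, α_I, θ_I, λ_I)` in `ℝ`: the result is the quadruple
`(prodIntervalGraph G, θ', λ', α')` in `W × ℝ`. -/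
structure IsIntervalProduct (G : SimpleGraph V) (θ : GraphConn G) (lam : CompatSys G)
    (α : AxialFn G W) (θ' : GraphConn (prodIntervalGraph G))
    (lam' : CompatSys (prodIntervalGraph G))
    (α' : AxialFn (prodIntervalGraph G) (W × ℝ)) : Prop where
  conn' : IsConnection (prodIntervalGraph G) θ'
  compat' : IsCompatSystem (prodIntervalGraph G) θ' lam'
  alpha_hor : ∀ ⦃x y : V × Bool⦄ (h' : (prodIntervalGraph G).Adj x y) (h : G.Adj x.1 y.1),
      x.2 = y.2 → α' h' = (α h, 0)
  alpha_up : ∀ ⦃x y : V × Bool⦄ (h' : (prodIntervalGraph G).Adj x y),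
      x.1 = y.1 → x.2 = false → α' h' = (0, 1)
  alpha_down : ∀ ⦃x y : V × Bool⦄ (h' : (prodIntervalGraph G).Adj x y),
      x.1 = y.1 → x.2 = true → α' h' = (0, -1)
  conn_hor_hor : ∀ ⦃x y : V × Bool⦄ (h' : (prodIntervalGraph G).Adj x y) (h : G.Adj x.1 y.1),
      x.2 = y.2 → ∀ (w' : ↥((prodIntervalGraph G).neighborSet x)) (w : ↥(G.neighborSet x.1)),
        (↑w' : V × Bool) = (↑w, x.2) → (↑(θ' h' w') : V × Bool) = (↑(θ h w), x.2)
  conn_hor_ver : ∀ ⦃x y : V × Bool⦄ (h' : (prodIntervalGraph G).Adj x y),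
      x.2 = y.2 → ∀ (w' : ↥((prodIntervalGraph G).neighborSet x)),
        (↑w' : V × Bool) = (x.1, !x.2) → (↑(θ' h' w') : V × Bool) = (y.1, !x.2)
  conn_ver_hor : ∀ ⦃x y : V × Bool⦄ (h' : (prodIntervalGraph G).Adj x y),
      x.1 = y.1 → ∀ (w' : ↥((prodIntervalGraph G).neighborSet x)) (w : ↥(G.neighborSet x.1)),
        (↑w' : V × Bool) = (↑w, x.2) → (↑(θ' h' w') : V × Bool) = (↑w, y.2)
  lam_hor_hor : ∀ ⦃x y : V × Bool⦄ (h' : (prodIntervalGraph G).Adj x y) (h : G.Adj x.1 y.1),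
      x.2 = y.2 → ∀ (w' : ↥((prodIntervalGraph G).neighborSet x)) (w : ↥(G.neighborSet x.1)),
        (↑w' : V × Bool) = (↑w, x.2) → lam' h' w' = lam h w
  lam_hor_ver : ∀ ⦃x y : V × Bool⦄ (h' : (prodIntervalGraph G).Adj x y),
      x.2 = y.2 → ∀ (w' : ↥((prodIntervalGraph G).neighborSet x)),
        (↑w' : V × Bool) = (x.1, !x.2) → lam' h' w' = 1
  lam_ver : ∀ ⦃x y : V × Bool⦄ (h' : (prodIntervalGraph G).Adj x y),
      x.1 = y.1 → ∀ (w' : ↥((prodIntervalGraph G).neighborSet x)), lam' h' w' = 1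

end Misc

section Polytope

/-- `(G, A)` is the vertex–edge graph of a simple `d`-polytope `S ⊆ ℝ^d`, with
`A(uv) = v - u` along each oriented edge: `g` identifies the vertices of `G` with the
extreme points of `S = convexHull F`, `S` is full-dimensional, adjacency corresponds to
exposed one-dimensional faces (segments), and `A` is given by differences of vertices. -/
def IsPolytopeSkeleton {d : ℕ} (G : SimpleGraph V) (A : AxialFn G (Fin d → ℝ)) : Prop :=
  ∃ (F : Finset (Fin d → ℝ)) (g : V → (Fin d → ℝ)),
    affineSpan ℝ (convexHull ℝ (F : Set (Fin d → ℝ))) = ⊤ ∧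
    Function.Injective g ∧
    Set.range g = Set.extremePoints ℝ (convexHull ℝ (F : Set (Fin d → ℝ))) ∧
    (∀ p q : V, G.Adj p q ↔ (g p ≠ g q ∧
        IsExposed ℝ (convexHull ℝ (F : Set (Fin d → ℝ))) (segment ℝ (g p) (g q)))) ∧
    (∀ ⦃p q : V⦄ (h : G.Adj p q), A h = g q - g p)

end Polytope


/-!
Fix a base vertex `p₀` of `H` and give a normal edge `e` at `p` the weight `transNum` of `e`
along an `H`-walk from `p` to `p₀`. Concatenating one such walk with the reverse of another gives
an `H`-loop at `p`: trivial normal holonomy says it transports `e` back to `e`, and levelness then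
says its local holonomy number is `1`, so the two walks give the same weight. Prolonging the walk
from `q` by an edge `pq` of `H` yields the blow-up relation `n(e) = λ_{pq}(e) · n(θ_{pq} e)`.
-/

namespace SimpleGraph.Walk

variable {G : SimpleGraph V} {θ : GraphConn G} {lam : CompatSys G}

@[simp]
lemma transport_append {p q r : V} (w₁ : G.Walk p q) (w₂ : G.Walk q r)
    (e : ↥(G.neighborSet p)) :
    transport θ (w₁.append w₂) e = transport θ w₂ (transport θ w₁ e) := by
  induction w₁ with
  | nil => rfl
  | cons h w ih => simp only [Walk.cons_append, transport, ih]

@[simp]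
lemma transNum_append {p q r : V} (w₁ : G.Walk p q) (w₂ : G.Walk q r)
    (e : ↥(G.neighborSet p)) :
    transNum θ lam (w₁.append w₂) e
      = transNum θ lam w₁ e * transNum θ lam w₂ (transport θ w₁ e) := by
  induction w₁ with
  | nil => simp only [Walk.nil_append, transNum, transport, one_mul]
  | cons h w ih => simp only [Walk.cons_append, transNum, transport, ih, mul_assoc]

lemma transNum_pos (hcomp : IsCompatSystem G θ lam) {p q : V} (w : G.Walk p q)
    (e : ↥(G.neighborSet p)) : 0 < transNum θ lam w e := by
  induction w with
  | nil => exact one_pos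
  | cons h w ih => exact mul_pos (hcomp.1 _ _) (ih _)

lemma transport_reverse_transport (hc : IsConnection G θ) {p q : V} (w : G.Walk p q)
    (e : ↥(G.neighborSet p)) :
    transport θ w.reverse (transport θ w e) = e := by
  induction w with
  | nil => rfl
  | cons h w ih =>
    simp only [Walk.reverse_cons, transport, transport_append, ih, hc.2 h,
      Equiv.symm_apply_apply]

lemma transport_transport_reverse (hc : IsConnection G θ) {p q : V} (w : G.Walk p q)
    (e : ↥(G.neighborSet q)) :
    transport θ w (transport θ w.reverse e) = e := by
  simpa only [Walk.reverse_reverse] using transport_reverse_transport hc w.reverse e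

lemma transNum_reverse (hc : IsConnection G θ) (hcomp : IsCompatSystem G θ lam)
    {p q : V} (w : G.Walk p q) (e : ↥(G.neighborSet p)) :
    transNum θ lam w.reverse (transport θ w e) = (transNum θ lam w e)⁻¹ := by
  induction w with
  | nil => simp only [Walk.reverse_nil, transNum, inv_one]
  | cons h w ih =>
    simp only [Walk.reverse_cons, transport, transNum_append, ih,
      transport_reverse_transport hc, transNum, hcomp.2 h, mul_inv, mul_one, mul_comm]

end SimpleGraph.Walk

namespace WalkIn

variable {G : SimpleGraph V} {H : G.Subgraph}

lemma append {p q r : V} {w₁ : G.Walk p q} {w₂ : G.Walk q r}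
    (h₁ : WalkIn H w₁) (h₂ : WalkIn H w₂) : WalkIn H (w₁.append w₂) := by
  intro d hd
  rw [Walk.darts_append, List.mem_append] at hd
  exact hd.elim (h₁ d) (h₂ d)

lemma reverse {p q : V} {w : G.Walk p q} (hw : WalkIn H w) : WalkIn H w.reverse := by
  intro d hd
  rw [Walk.darts_reverse, List.mem_reverse, List.mem_map] at hd
  obtain ⟨d', hd', rfl⟩ := hd
  exact (hw d' hd').symm

lemma cons {p q r : V} {h : H.Adj p q} {w : G.Walk q r} (hw : WalkIn H w) :
    WalkIn H (Walk.cons (H.adj_sub h) w) := by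
  intro d hd
  rw [Walk.darts_cons, List.mem_cons] at hd
  rcases hd with rfl | hd
  exacts [h, hw d hd]

end WalkIn

lemma SimpleGraph.Subgraph.Connected.exists_walkIn {G : SimpleGraph V} {H : G.Subgraph}
    (hH : H.Connected) {p q : V} (hp : p ∈ H.verts) (hq : q ∈ H.verts) :
    ∃ w : G.Walk p q, WalkIn H w := by
  obtain ⟨w⟩ := hH.preconnected ⟨p, hp⟩ ⟨q, hq⟩
  suffices ∀ {x y : ↥H.verts} (w : H.coe.Walk x y), ∃ w' : G.Walk x y, WalkIn H w' from this w
  intro x y w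
  induction w with
  | nil => exact ⟨Walk.nil, fun d hd => by simp at hd⟩
  | cons h _ ih =>
    obtain ⟨w', hw'⟩ := ih
    exact ⟨_, hw'.cons (h := h)⟩

section NormalHolonomy

variable {G : SimpleGraph V} {θ : GraphConn G} {lam : CompatSys G} {H : G.Subgraph}

lemma transport_eq_of_walkIn (hc : IsConnection G θ) (htriv : TrivialNormalHolonomy θ H)
    {p q : V} {w₁ w₂ : G.Walk p q} (hw₁ : WalkIn H w₁) (hw₂ : WalkIn H w₂)
    {e : ↥(G.neighborSet p)} (he : ¬ H.Adj p ↑e) :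
    transport θ w₁ e = transport θ w₂ e := by
  have hloop := htriv p _ (hw₁.append hw₂.reverse) e he
  rw [Walk.transport_append] at hloop
  simpa only [Walk.transport_transport_reverse hc] using congrArg (transport θ w₂) hloop

lemma transNum_eq_of_walkIn (hc : IsConnection G θ) (hcomp : IsCompatSystem G θ lam)
    (hlev : LevelSub θ lam H) (htriv : TrivialNormalHolonomy θ H)
    {p q : V} {w₁ w₂ : G.Walk p q} (hw₁ : WalkIn H w₁) (hw₂ : WalkIn H w₂)
    {e : ↥(G.neighborSet p)} (he : ¬ H.Adj p ↑e) :
    transNum θ lam w₁ e = transNum θ lam w₂ e := by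
  have hloop := hlev p _ (hw₁.append hw₂.reverse) e he
    (htriv p _ (hw₁.append hw₂.reverse) e he)
  rw [Walk.transNum_append, transport_eq_of_walkIn hc htriv hw₁ hw₂ he,
    Walk.transNum_reverse hc hcomp, mul_inv_eq_one₀ (Walk.transNum_pos hcomp w₂ e).ne'] at hloop
  exact hloop

open Classical in
noncomputable def holonomyScale (θ : GraphConn G) (lam : CompatSys G) (H : G.Subgraph)
    (p₀ p : V) (e : ↥(G.neighborSet p)) : ℝ :=
  if hw : ∃ w : G.Walk p p₀, WalkIn H w then transNum θ lam hw.choose e else 1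

lemma holonomyScale_pos (hcomp : IsCompatSystem G θ lam) (p₀ p : V) (e : ↥(G.neighborSet p)) :
    0 < holonomyScale θ lam H p₀ p e := by
  unfold holonomyScale
  split_ifs
  exacts [Walk.transNum_pos hcomp _ e, one_pos]

lemma holonomyScale_eq_transNum_choose {p₀ p : V} (hw : ∃ w : G.Walk p p₀, WalkIn H w)
    (e : ↥(G.neighborSet p)) :
    holonomyScale θ lam H p₀ p e = transNum θ lam hw.choose e :=
  dif_pos hw

lemma holonomyScale_eq_transNum (hc : IsConnection G θ) (hcomp : IsCompatSystem G θ lam)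
    (hlev : LevelSub θ lam H) (htriv : TrivialNormalHolonomy θ H)
    {p₀ p : V} {w : G.Walk p p₀} (hw : WalkIn H w)
    {e : ↥(G.neighborSet p)} (he : ¬ H.Adj p ↑e) :
    holonomyScale θ lam H p₀ p e = transNum θ lam w e := by
  rw [holonomyScale_eq_transNum_choose ⟨w, hw⟩]
  exact transNum_eq_of_walkIn hc hcomp hlev htriv (Exists.choose_spec ⟨w, hw⟩) hw he

lemma isBlowUpSystem_holonomyScale (hc : IsConnection G θ) (hcomp : IsCompatSystem G θ lam)
    (hlev : LevelSub θ lam H) (htriv : TrivialNormalHolonomy θ H)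
    {p₀ : V} (hp₀ : ∀ p ∈ H.verts, ∃ w : G.Walk p p₀, WalkIn H w) :
    IsBlowUpSystem θ lam H (holonomyScale θ lam H p₀) := by
  refine ⟨fun p _ e _ => holonomyScale_pos hcomp p₀ p e, fun p q h e he => ?_⟩
  have hq := hp₀ q (H.edge_vert h.symm)
  rw [holonomyScale_eq_transNum hc hcomp hlev htriv (hq.choose_spec.cons (h := h)) he,
    holonomyScale_eq_transNum_choose hq]
  rfl

end NormalHolonomy

theorem level_trivial_holonomy_subskeleton_admits_blowup_system_general
    {V : Type u} {n : ℕ}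
    (G : SimpleGraph V) (θ : GraphConn G) (lam : CompatSys G)
    (α : AxialFn G (Fin n → ℝ))
    (hgen : IsGenSkeleton G θ lam α)
    (H : G.Subgraph) (hsub : IsSubskeleton θ H)
    (hlev : LevelSub θ lam H) (htriv : TrivialNormalHolonomy θ H) :
    ∃ bn : ∀ p : V, ↥(G.neighborSet p) → ℝ, IsBlowUpSystem θ lam H bn := by
  obtain ⟨p₀, hp₀⟩ := hsub.connected.nonempty
  exact ⟨holonomyScale θ lam H p₀, isBlowUpSystem_holonomyScale hgen.conn hgen.compat hlev htriv
    fun p hp => hsub.connected.exists_walkIn hp hp₀⟩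

/-- A level subskeleton with trivial normal holonomy admits a blow-up system. -/
theorem level_trivial_holonomy_subskeleton_admits_blowup_system
    {V : Type u} [Fintype V] {n : ℕ}
    (G : SimpleGraph V) (θ : GraphConn G) (lam : CompatSys G)
    (α : AxialFn G (Fin n → ℝ))
    (hgen : IsGenSkeleton G θ lam α)
    (H : G.Subgraph) (hsub : IsSubskeleton θ H)
    (hlev : LevelSub θ lam H) (htriv : TrivialNormalHolonomy θ H) :
    ∃ bn : ∀ p : V, ↥(G.neighborSet p) → ℝ, IsBlowUpSystem θ lam H bn :=
  level_trivial_holonomy_subskeleton_admits_blowup_system_general G θ lam α hgen H hsub hlev htriv
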